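/- arXiv:2308.15409 — 3 statements merged into one kernel-verified Lean document; each statement's English description precedes it below -/
import Mathlib

section
/- Let V be a real inner product space and let w^0, w^1, ..., w^N ∈ V for N ≥ 2. Define the backward difference ∂_t^+ w^n = (w^n − w^{n-1})/Δt and the BDF2 difference D_t^{(2)} w^n = (3/2)∂_t^+ w^n − (1/2)∂_t^+ w^{n-1}, where Δt > 0. Then Δt·⟨∂_t^+ w^1, w^1⟩ + Δt·Σ_{n=2}^N ⟨D_t^{(2)} w^n, w^n⟩ ≥ (3/4)‖w^N‖² − (1/4)(‖w^{N-1}‖² + ‖w^1‖² + ‖w^0‖²). -/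
/-!
The BDF2 scheme is G-stable: with the energy `G(a, b) = ‖a‖² + ‖2a - b‖²` one has the identity
`4⟨(3/2)(a - b) - (1/2)(b - c), a⟩ = G(a, b) - G(b, c) + ‖a - 2b + c‖²`,
so the sum telescopes down to the backward Euler step, for which
`4⟨a - b, a⟩ = G(a, b) - ‖a‖² - ‖b‖²`. Finally `G(a, b) ≥ 3‖a‖² - ‖b‖²` by Cauchy–Schwarz.
-/

namespace BDF2

variable {V : Type*} [NormedAddCommGroup V] [InnerProductSpace ℝ V]

def energy (a b : V) : ℝ := ‖a‖ ^ 2 + ‖(2 : ℝ) • a - b‖ ^ 2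

lemma energy_eq (a b : V) :
    energy a b = 5 * ‖a‖ ^ 2 - 4 * inner ℝ a b + ‖b‖ ^ 2 := by
  simp only [energy, ← real_inner_self_eq_norm_sq, inner_sub_left, inner_sub_right,
    real_inner_smul_left, real_inner_smul_right, real_inner_comm a b]
  ring

lemma four_mul_inner_sub_self (a b : V) :
    4 * inner ℝ (a - b) a = energy a b - ‖a‖ ^ 2 - ‖b‖ ^ 2 := by
  rw [energy_eq, inner_sub_left, real_inner_self_eq_norm_sq, real_inner_comm]
  ring

lemma four_mul_inner_bdf2_self (a b c : V) :
    4 * inner ℝ ((3 / 2 : ℝ) • (a - b) - (1 / 2 : ℝ) • (b - c)) a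
      = energy a b - energy b c + ‖a - (2 : ℝ) • b + c‖ ^ 2 := by
  simp only [energy_eq, ← real_inner_self_eq_norm_sq, inner_sub_left, inner_sub_right,
    inner_add_left, inner_add_right, real_inner_smul_left, real_inner_smul_right,
    real_inner_comm a b, real_inner_comm a c, real_inner_comm b c]
  ring

lemma energy_sub_energy_le (a b c : V) :
    energy a b - energy b c ≤ 4 * inner ℝ ((3 / 2 : ℝ) • (a - b) - (1 / 2 : ℝ) • (b - c)) a := by
  rw [four_mul_inner_bdf2_self]
  nlinarith [sq_nonneg ‖a - (2 : ℝ) • b + c‖]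

lemma three_mul_norm_sq_sub_le_energy (a b : V) : 3 * ‖a‖ ^ 2 - ‖b‖ ^ 2 ≤ energy a b := by
  rw [energy_eq]
  nlinarith [real_inner_le_norm a b, sq_nonneg (‖a‖ - ‖b‖)]

lemma energy_sub_energy_le_sum (w : ℕ → V) {N : ℕ} (hN : 1 ≤ N) :
    energy (w N) (w (N - 1)) - energy (w 1) (w 0)
      ≤ 4 * ∑ n ∈ Finset.Icc 2 N,
          inner ℝ ((3 / 2 : ℝ) • (w n - w (n - 1)) - (1 / 2 : ℝ) • (w (n - 1) - w (n - 2))) (w n) := by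
  induction N, hN using Nat.le_induction with
  | base => simp
  | succ N hN ih =>
    rw [Finset.sum_Icc_succ_top (by omega), mul_add]
    have hstep := energy_sub_energy_le (w (N + 1)) (w N) (w (N - 1))
    simp only [Nat.add_sub_cancel, show N + 1 - 2 = N - 1 by omega] at hstep ⊢
    linarith

lemma mul_inner_inv_smul {Δt : ℝ} (hΔt : Δt ≠ 0) (x y : V) :
    Δt * inner ℝ (Δt⁻¹ • x) y = inner ℝ x y := by
  rw [real_inner_smul_left, mul_inv_cancel_left₀ hΔt]

end BDF2

open BDF2 in
/-- BDF2 telescoping inequality: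
    Δt⟨∂w¹,w¹⟩ + Δt Σ_{n=2}^N ⟨D²wⁿ, wⁿ⟩
      ≥ (3/4)‖w^N‖² − (1/4)(‖w^{N-1}‖² + ‖w¹‖² + ‖w⁰‖²). -/
theorem bdf2_sum_inequality
    {V : Type*} [NormedAddCommGroup V] [InnerProductSpace ℝ V]
    (N : ℕ) (hN : 2 ≤ N) (Δt : ℝ) (hΔt : 0 < Δt) (w : ℕ → V) :
    Δt * (inner ℝ (Δt⁻¹ • (w 1 - w 0)) (w 1) : ℝ)
      + Δt * ∑ n ∈ Finset.Icc 2 N,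
          (inner ℝ ((3 / 2 : ℝ) • (Δt⁻¹ • (w n - w (n - 1)))
                   - (1 / 2 : ℝ) • (Δt⁻¹ • (w (n - 1) - w (n - 2)))) (w n) : ℝ)
      ≥ (3 / 4) * ‖w N‖ ^ 2
        - (1 / 4) * (‖w (N - 1)‖ ^ 2 + ‖w 1‖ ^ 2 + ‖w 0‖ ^ 2) := by
  simp only [smul_comm _ Δt⁻¹, ← smul_sub, Finset.mul_sum, mul_inner_inv_smul hΔt.ne']
  have hsum := energy_sub_energy_le_sum w (by omega : 1 ≤ N)
  have hstart := four_mul_inner_sub_self (w 1) (w 0)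
  have hend := three_mul_norm_sq_sub_le_energy (w N) (w (N - 1))
  linarith
end

section
/- Let Q ∈ ℝ^{m×k}, Σ ∈ ℝ^{k×k}, R ∈ ℝ^{ℓ×k} with Q^T Q = I_k and R^T R = I_k, and let u ∈ ℝ^m with residual e = u − QQ^T u, p = |e| > 0, ẽ = e/p. Let Ȳ = [[Σ, Q^T u],[0, p]] ∈ ℝ^{(k+1)×(k+1)} and let Ȳ = Q̄ Σ̄ R̄^T be its full SVD. Then the updated triple Q' = [Q | ẽ]·Q̄, Σ' = Σ̄, R' = [[R,0],[0,1]]·R̄ satisfies Q' Σ' (R')^T = [Q Σ R^T | u] exactly, and Q', R' have orthonormal columns. -/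
/-!
Since `e = u - QQᵀu` is orthogonal to the columns of `Q`, the matrix `[Q | ẽ]` has orthonormal
columns, and so does `[[R, 0], [0, 1]]`; products of matrices with orthonormal columns keep
orthonormal columns. The reconstruction is block multiplication:
`[Q | ẽ] Ȳ = [QΣ | QQᵀu + pẽ] = [QΣ | u]`, and multiplying by `[[R, 0], [0, 1]]ᵀ` gives
`[QΣRᵀ | u]`; the SVD `Ȳ = Q̄Σ̄R̄ᵀ` only regroups this product.
-/

open Matrix

namespace Matrix

variable {α : Type*} [CommRing α] {l m n o : Type*}

theorem transpose_mul_self_eq_one_mul [Fintype l] [Fintype m] [DecidableEq m] [DecidableEq n]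
    {A : Matrix l m α} {B : Matrix m n α}
    (hA : Aᵀ * A = 1) (hB : Bᵀ * B = 1) : (A * B)ᵀ * (A * B) = 1 := by
  rw [transpose_mul, Matrix.mul_assoc, ← Matrix.mul_assoc Aᵀ, hA, Matrix.one_mul, hB]

theorem fromBlocks_zero_zero_transpose_mul_self_eq_one [Fintype l] [Fintype n] [DecidableEq m]
    [DecidableEq o] {A : Matrix l m α} {D : Matrix n o α} (hA : Aᵀ * A = 1) (hD : Dᵀ * D = 1) :
    (fromBlocks A 0 0 D)ᵀ * fromBlocks A 0 0 D = 1 := by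
  rw [fromBlocks_transpose, fromBlocks_multiply]
  simp [hA, hD]

theorem transpose_mulVec_sub_mulVec_transpose_mulVec_eq_zero [Fintype m] [Fintype n]
    [DecidableEq n] {Q : Matrix m n α} (hQ : Qᵀ * Q = 1) (u : m → α) :
    Qᵀ *ᵥ (u - Q *ᵥ (Qᵀ *ᵥ u)) = 0 := by
  rw [mulVec_sub, mulVec_mulVec, hQ, one_mulVec, sub_self]

theorem fromCols_replicateCol_transpose_mul_self_eq_one [Fintype m] [DecidableEq n]
    {Q : Matrix m n α} {v : m → α} (hQ : Qᵀ * Q = 1) (hQv : Qᵀ *ᵥ v = 0) (hv : v ⬝ᵥ v = 1) :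
    (fromCols Q (replicateCol Unit v))ᵀ * fromCols Q (replicateCol Unit v) = 1 := by
  have hQv' : Qᵀ * replicateCol Unit v = 0 := by
    rw [← replicateCol_mulVec, hQv, replicateCol_zero]
  have hvv : (replicateCol Unit v)ᵀ * replicateCol Unit v = 1 := by
    ext; simpa [mul_apply, dotProduct] using hv
  have hvQ : (replicateCol Unit v)ᵀ * Q = 0 := by
    rw [← transpose_transpose Q, ← transpose_mul, hQv', transpose_zero]
  rw [transpose_fromCols, fromRows_mul_fromCols, hQ, hQv', hvQ, hvv, fromBlocks_one]

theorem fromCols_replicateCol_mul_fromBlocks [Fintype n] {Q : Matrix m n α} {S : Matrix n l α}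
    {v u : m → α} {w : n → α} {p : α} (h : Q *ᵥ w + p • v = u) :
    fromCols Q (replicateCol Unit v) *
        fromBlocks S (replicateCol Unit w) 0 (of fun _ _ => p : Matrix Unit Unit α) =
      fromCols (Q * S) (replicateCol Unit u) := by
  rw [fromCols_mul_fromBlocks, Matrix.mul_zero, add_zero, ← h]
  congr 1
  ext i
  simp [mul_apply, mulVec, dotProduct, mul_comm]

theorem fromCols_replicateCol_mul_fromBlocks_transpose [Fintype o]
    {A : Matrix m o α} {R : Matrix l o α} (u : m → α) :
    fromCols A (replicateCol Unit u) * (fromBlocks R 0 0 1 : Matrix (l ⊕ Unit) (o ⊕ Unit) α)ᵀ =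
      fromCols (A * Rᵀ) (replicateCol Unit u) := by
  rw [fromBlocks_transpose, fromCols_mul_fromBlocks]
  simp

end Matrix

theorem inv_sqrt_smul_dotProduct_self_eq_one {m : Type*} [Fintype m] {e : m → ℝ}
    (he : √(e ⬝ᵥ e) ≠ 0) : ((√(e ⬝ᵥ e))⁻¹ • e) ⬝ᵥ ((√(e ⬝ᵥ e))⁻¹ • e) = 1 := by
  have hee : e ⬝ᵥ e = √(e ⬝ᵥ e) ^ 2 := (Real.sq_sqrt (dotProduct_self_star_nonneg e)).symm
  rw [smul_dotProduct, dotProduct_smul, smul_eq_mul, smul_eq_mul]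
  nth_rewrite 3 [hee]
  field_simp

/-- Exact rank-increasing incremental SVD update (no truncation): with
    Ȳ = [[Σ, Qᵀu],[0, p]] = Q̄ Σ̄ R̄ᵀ, the updated factors
    Q' = [Q | ẽ]Q̄, Σ' = Σ̄, R' = [[R,0],[0,1]]R̄ satisfy
    Q'Σ'(R')ᵀ = [QΣRᵀ | u], and Q', R' have orthonormal columns. -/
theorem isvd_update_exact
    (m k ℓ : ℕ)
    (Q : Matrix (Fin m) (Fin k) ℝ)
    (S : Matrix (Fin k) (Fin k) ℝ)
    (R : Matrix (Fin ℓ) (Fin k) ℝ)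
    (hQ : Q.transpose * Q = 1) (hR : R.transpose * R = 1)
    (u : Fin m → ℝ)
    (e : Fin m → ℝ) (he : e = u - Q.mulVec (Q.transpose.mulVec u))
    (p : ℝ) (hp : p = Real.sqrt (e ⬝ᵥ e)) (hppos : 0 < p)
    (et : Fin m → ℝ) (het : et = p⁻¹ • e)
    (Ybar : Matrix (Fin k ⊕ Unit) (Fin k ⊕ Unit) ℝ)
    (hY : Ybar = Matrix.fromBlocks S (Matrix.of fun i _ => Q.transpose.mulVec u i)
                   0 (Matrix.of fun _ _ => p))
    (Qbar Sbar Rbar : Matrix (Fin k ⊕ Unit) (Fin k ⊕ Unit) ℝ)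
    (hQbar : Qbar.transpose * Qbar = 1)
    (hRbar : Rbar.transpose * Rbar = 1)
    (hSVD : Ybar = Qbar * Sbar * Rbar.transpose)
    (Q' : Matrix (Fin m) (Fin k ⊕ Unit) ℝ)
    (hQ' : Q' = (Matrix.of fun (i : Fin m) (j : Fin k ⊕ Unit) =>
                   Sum.elim (fun a => Q i a) (fun _ => et i) j) * Qbar)
    (R' : Matrix (Fin ℓ ⊕ Unit) (Fin k ⊕ Unit) ℝ)
    (hR' : R' = Matrix.fromBlocks R 0 0 1 * Rbar) :
    Q' * Sbar * R'.transpose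
        = Matrix.of (fun (i : Fin m) (j : Fin ℓ ⊕ Unit) =>
            Sum.elim (fun jl => (Q * S * R.transpose) i jl) (fun _ => u i) j)
    ∧ Q'.transpose * Q' = 1
    ∧ R'.transpose * R' = 1 := by
  set E := fromCols Q (replicateCol Unit et)
  set F : Matrix (Fin ℓ ⊕ Unit) (Fin k ⊕ Unit) ℝ := fromBlocks R 0 0 1
  change Q' = E * Qbar at hQ'
  change R' = F * Rbar at hR'
  change Ybar = fromBlocks S (replicateCol Unit (Qᵀ *ᵥ u)) 0 (of fun _ _ => p) at hY
  have hp0 : p ≠ 0 := hppos.ne'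
  have hres : Qᵀ *ᵥ e = 0 := he ▸ transpose_mulVec_sub_mulVec_transpose_mulVec_eq_zero hQ u
  have het_unit : et ⬝ᵥ et = 1 := by
    subst het hp
    exact inv_sqrt_smul_dotProduct_self_eq_one hp0
  have hu : Q *ᵥ (Qᵀ *ᵥ u) + p • et = u := by
    rw [het, smul_inv_smul₀ hp0, he, add_sub_cancel]
  have hE : Eᵀ * E = 1 :=
    fromCols_replicateCol_transpose_mul_self_eq_one hQ (by rw [het, mulVec_smul, hres, smul_zero])
      het_unit
  have hF : Fᵀ * F = 1 := fromBlocks_zero_zero_transpose_mul_self_eq_one hR (by simp)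
  refine ⟨?_, hQ' ▸ transpose_mul_self_eq_one_mul hE hQbar,
    hR' ▸ transpose_mul_self_eq_one_mul hF hRbar⟩
  calc Q' * Sbar * R'ᵀ = E * Ybar * Fᵀ := by
        rw [hQ', hR', hSVD, transpose_mul]
        simp only [Matrix.mul_assoc]
    _ = fromCols (Q * S * Rᵀ) (replicateCol Unit u) := by
        rw [hY, fromCols_replicateCol_mul_fromBlocks hu,
          fromCols_replicateCol_mul_fromBlocks_transpose]
end

section
/- Let Q ∈ ℝ^{m×k} and R ∈ ℝ^{ℓ×k} have orthonormal columns, Σ ∈ ℝ^{k×k}, and let u_1, ..., u_s ∈ ℝ^m. Form Y = [Σ | Q^T u_1 | ... | Q^T u_s] ∈ ℝ^{k×(k+s)} and let Y = Q_Y Σ_Y R_Y^T be a thin SVD of Y. Write R_Y = [R_Y^{(1)}; R_Y^{(2)}] with R_Y^{(1)} ∈ ℝ^{k×k}. Then (Q Q_Y) Σ_Y [R R_Y^{(1)}; R_Y^{(2)}]^T = [Q Σ R^T | Q Q^T u_1 | ... | Q Q^T u_s], i.e., the updated factorization exactly represents the matrix obtained by appending the projections of the new columns. -/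
open Matrix

/-!
Writing `R' = [R R_Y⁽¹⁾; R_Y⁽²⁾]`, we have `R'ᵀ = [R_Y⁽¹⁾ᵀ Rᵀ | R_Y⁽²⁾ᵀ]`, so the left-hand side
is `Q · [Q_Y Σ_Y R_Y⁽¹⁾ᵀ Rᵀ | Q_Y Σ_Y R_Y⁽²⁾ᵀ]`. Comparing the two column blocks of
`Y = Q_Y Σ_Y R_Yᵀ` gives `Q_Y Σ_Y R_Y⁽¹⁾ᵀ = Σ` and `Q_Y Σ_Y R_Y⁽²⁾ᵀ = Qᵀ u`.
-/

namespace Matrix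

variable {α : Type*} [CommSemiring α] {m k l n n₁ n₂ : Type*} [Fintype k] [Fintype n]
  [Fintype n₁]

theorem mul_mul_transpose_fromRows_mul_left (P : Matrix m k α) (C : Matrix k n α)
    (R : Matrix l n₁ α) (A₁ : Matrix n₁ n α) (A₂ : Matrix n₂ n α) (S : Matrix k n₁ α)
    (B : Matrix k n₂ α) (h : C * (fromRows A₁ A₂)ᵀ = fromCols S B) :
    P * C * (fromRows (R * A₁) A₂)ᵀ = fromCols (P * S * Rᵀ) (P * B) := by
  rw [transpose_fromRows, mul_fromCols] at h
  obtain ⟨hS, hB⟩ := fromCols_inj h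
  rw [transpose_fromRows, transpose_mul, mul_fromCols, ← hS, ← hB]
  simp only [Matrix.mul_assoc]

end Matrix

theorem isvd_p_truncation_update_general
    (m k ℓ s : ℕ)
    (Q : Matrix (Fin m) (Fin k) ℝ)
    (S : Matrix (Fin k) (Fin k) ℝ)
    (R : Matrix (Fin ℓ) (Fin k) ℝ)
    (u : Fin s → Fin m → ℝ)
    (Y : Matrix (Fin k) (Fin k ⊕ Fin s) ℝ)
    (hY : Y = Matrix.of (fun (i : Fin k) (j : Fin k ⊕ Fin s) =>
            Sum.elim (fun a => S i a) (fun b => Q.transpose.mulVec (u b) i) j))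
    (QY SY : Matrix (Fin k) (Fin k) ℝ)
    (RY : Matrix (Fin k ⊕ Fin s) (Fin k) ℝ)
    (hSVD : Y = QY * SY * RY.transpose)
    (RY1 : Matrix (Fin ℓ) (Fin k) ℝ)
    (hRY1 : RY1 = R * Matrix.of (fun (i : Fin k) (a : Fin k) => RY (Sum.inl i) a))
    (R' : Matrix (Fin ℓ ⊕ Fin s) (Fin k) ℝ)
    (hR' : R' = Matrix.of (fun (i : Fin ℓ ⊕ Fin s) (a : Fin k) =>
            Sum.elim (fun j => RY1 j a) (fun b => RY (Sum.inr b) a) i)) :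
    (Q * QY) * SY * R'.transpose
      = Matrix.of (fun (i : Fin m) (j : Fin ℓ ⊕ Fin s) =>
          Sum.elim (fun jl => (Q * S * R.transpose) i jl)
            (fun b => Q.mulVec (Q.transpose.mulVec (u b)) i) j) := by
  have hY_cols : Y = fromCols S (Qᵀ * (of u)ᵀ) := by
    rw [hY]; ext i (a | b) <;> rfl
  have hR'_rows : R' = fromRows (R * RY.toRows₁) RY.toRows₂ := by
    rw [hR', hRY1]; ext (j | b) a <;> rfl
  have hRHS : of (fun i j => Sum.elim (fun jl => (Q * S * Rᵀ) i jl)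
      (fun b => (Q *ᵥ (Qᵀ *ᵥ u b)) i) j) = fromCols (Q * S * Rᵀ) (Q * (Qᵀ * (of u)ᵀ)) := by
    ext i (j | b) <;> rfl
  rw [hRHS, hR'_rows, Matrix.mul_assoc Q]
  exact mul_mul_transpose_fromRows_mul_left Q (QY * SY) R _ _ S _
    (by rw [fromRows_toRows, ← hSVD, hY_cols])

/-- Exact incremental SVD "p-truncation" update: with
    Y = [Σ | Qᵀu₁ | ... | Qᵀu_s] = Q_Y Σ_Y R_Yᵀ (thin SVD) and
    R_Y = [R_Y⁽¹⁾; R_Y⁽²⁾], the updated factorization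
    (QQ_Y)·Σ_Y·[R R_Y⁽¹⁾; R_Y⁽²⁾]ᵀ equals [QΣRᵀ | QQᵀu₁ | ... | QQᵀu_s]. -/
theorem isvd_p_truncation_update
    (m k ℓ s : ℕ)
    (Q : Matrix (Fin m) (Fin k) ℝ)
    (S : Matrix (Fin k) (Fin k) ℝ)
    (R : Matrix (Fin ℓ) (Fin k) ℝ)
    (hQ : Q.transpose * Q = 1) (hR : R.transpose * R = 1)
    (u : Fin s → Fin m → ℝ)
    (Y : Matrix (Fin k) (Fin k ⊕ Fin s) ℝ)
    (hY : Y = Matrix.of (fun (i : Fin k) (j : Fin k ⊕ Fin s) =>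
            Sum.elim (fun a => S i a) (fun b => Q.transpose.mulVec (u b) i) j))
    (QY SY : Matrix (Fin k) (Fin k) ℝ)
    (RY : Matrix (Fin k ⊕ Fin s) (Fin k) ℝ)
    (hQY : QY.transpose * QY = 1)
    (hRY : RY.transpose * RY = 1)
    (hSVD : Y = QY * SY * RY.transpose)
    (RY1 : Matrix (Fin ℓ) (Fin k) ℝ)
    (hRY1 : RY1 = R * Matrix.of (fun (i : Fin k) (a : Fin k) => RY (Sum.inl i) a))
    (R' : Matrix (Fin ℓ ⊕ Fin s) (Fin k) ℝ)
    (hR' : R' = Matrix.of (fun (i : Fin ℓ ⊕ Fin s) (a : Fin k) =>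
            Sum.elim (fun j => RY1 j a) (fun b => RY (Sum.inr b) a) i)) :
    (Q * QY) * SY * R'.transpose
      = Matrix.of (fun (i : Fin m) (j : Fin ℓ ⊕ Fin s) =>
          Sum.elim (fun jl => (Q * S * R.transpose) i jl)
            (fun b => Q.mulVec (Q.transpose.mulVec (u b)) i) j) :=
  isvd_p_truncation_update_general m k ℓ s Q S R u Y hY QY SY RY hSVD RY1 hRY1 R' hR'
end
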